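/- arXiv:1803.05013 — 8 statements merged into one kernel-verified Lean document; each statement's English description precedes it below -/
import Mathlib

section
/- (Integration by parts for the left ABC fractional derivative) Let 0 < α < 1, B(α) > 0, and let f, g : [a,b] → ℝ be continuously differentiable. Then ∫_a^b g(t) · ^{ABC}_a D^α f(t) dt = ∫_a^b f(t) · ^{ABR}D_b^α g(t) dt + (B(α)/(1-α)) · [f(t) · E^1_{α,1,-α/(1-α),b^-} g(t)]_a^b. -/
open intervalIntegral

/-- One-parameter Mittag-Leffler function. -/
noncomputable def mittagLeffler (α z : ℝ) : ℝ :=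
  ∑' k : ℕ, z ^ k / Real.Gamma (α * k + 1)

/-- Left ABC fractional derivative with Mittag-Leffler kernel. -/
noncomputable def ABCleft (B α a : ℝ) (f : ℝ → ℝ) (t : ℝ) : ℝ :=
  (B / (1 - α)) * ∫ s in a..t, deriv f s * mittagLeffler α (-(α / (1 - α)) * (t - s) ^ α)

/-- Right ABR fractional derivative with Mittag-Leffler kernel. -/
noncomputable def ABRright (B α b : ℝ) (g : ℝ → ℝ) (t : ℝ) : ℝ :=
  -(B / (1 - α)) *
    deriv (fun x => ∫ s in x..b, g s * mittagLeffler α (-(α / (1 - α)) * (s - x) ^ α)) t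

/-- Right generalized fractional integral operator `E^1_{α,1,-α/(1-α),b^-}`. -/
noncomputable def Eright (α b : ℝ) (g : ℝ → ℝ) (t : ℝ) : ℝ :=
  ∫ s in t..b, mittagLeffler α (-(α / (1 - α)) * (s - t) ^ α) * g s

/-!
Fubini over the triangle `a ≤ s ≤ t ≤ b` turns the left-hand side into
`B / (1 - α) * ∫ f' · E g`, where `E g = Eright α b g`; the claim is then ordinary
integration by parts for `f · E g`, once `E g` is known to be differentiable on `(a, b)`.
The kernel `k u = E_α (-α / (1 - α) * u ^ α)` is not differentiable at `0`, so the
derivative is moved onto `g` instead: integrating by parts against the primitive `K` of `k`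
and applying Fubini once more gives
`E g x = g b * K (b - x) - ∫ r in x..b, ∫ s in r..b, g' s * k (s - r)`,
whose derivative is read off from the fundamental theorem of calculus.
-/

open MeasureTheory Set Filter Function

-- Wendel's inequality, from the log-convexity of `Γ`.
theorem Real.Gamma_add_one_sub_mul_rpow_le {x s : ℝ} (hx : 0 < x) (hs0 : 0 < s) (hs1 : s < 1) :
    Real.Gamma (x + 1 - s) * x ^ s ≤ Real.Gamma (x + 1) := by
  have hΓx := Real.Gamma_pos_of_pos hx
  have hconv := Real.Gamma_mul_add_mul_le_rpow_Gamma_mul_rpow_Gamma (by positivity : 0 < x + 1)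
    hx (sub_pos.2 hs1) hs0 (sub_add_cancel 1 s)
  rw [show (1 - s) * (x + 1) + s * x = x + 1 - s by ring, Real.Gamma_add_one hx.ne',
    Real.mul_rpow hx.le hΓx.le, mul_assoc, ← Real.rpow_add hΓx, sub_add_cancel, Real.rpow_one]
    at hconv
  calc Real.Gamma (x + 1 - s) * x ^ s ≤ x ^ (1 - s) * Real.Gamma x * x ^ s := by gcongr
    _ = Real.Gamma (x + 1) := by
      rw [mul_right_comm, ← Real.rpow_add hx, sub_add_cancel, Real.rpow_one,
        Real.Gamma_add_one hx.ne']

theorem summable_mittagLeffler {α : ℝ} (hα0 : 0 < α) (hα1 : α < 1) (z : ℝ) :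
    Summable fun k : ℕ => z ^ k / Real.Gamma (α * k + 1) := by
  refine summable_of_ratio_norm_eventually_le (r := 1 / 2) (by norm_num) ?_
  have hgrow : Tendsto (fun k : ℕ => (α * k + α) ^ α) atTop atTop :=
    (tendsto_rpow_atTop hα0).comp <| tendsto_atTop_add_const_right _ _ <|
      tendsto_natCast_atTop_atTop.const_mul_atTop hα0
  filter_upwards [hgrow.eventually_ge_atTop (2 * |z|)] with k hk
  have hx : 0 < α * k + α := by positivity
  have hΓ := Real.Gamma_add_one_sub_mul_rpow_le hx hα0 hα1
  have hΓk : 0 < Real.Gamma (α * k + 1) := Real.Gamma_pos_of_pos (by positivity)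
  rw [show α * k + α + 1 - α = α * k + 1 by ring] at hΓ
  have hΓk' : 0 < Real.Gamma (α * k + α + 1) := Real.Gamma_pos_of_pos (by positivity)
  rw [Nat.cast_succ, show α * (k + 1 : ℝ) + 1 = α * k + α + 1 by ring, norm_div, norm_div,
    norm_pow, norm_pow, Real.norm_of_nonneg hΓk.le, Real.norm_of_nonneg hΓk'.le,
    div_le_iff₀ hΓk', Real.norm_eq_abs, pow_succ]
  calc |z| ^ k * |z| ≤ 1 / 2 * |z| ^ k * (α * k + α) ^ α := by
        nlinarith [pow_nonneg (abs_nonneg z) k]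
    _ = 1 / 2 * (|z| ^ k / Real.Gamma (α * k + 1))
          * (Real.Gamma (α * k + 1) * (α * k + α) ^ α) := by
        field_simp
    _ ≤ 1 / 2 * (|z| ^ k / Real.Gamma (α * k + 1)) * Real.Gamma (α * k + α + 1) := by
        gcongr

theorem continuous_mittagLeffler {α : ℝ} (hα0 : 0 < α) (hα1 : α < 1) :
    Continuous (mittagLeffler α) := by
  refine continuous_iff_continuousAt.2 fun z₀ => ?_
  set R := |z₀| + 1
  have hΓ (k : ℕ) : 0 < Real.Gamma (α * k + 1) := Real.Gamma_pos_of_pos (by positivity)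
  have hcont : ContinuousOn (mittagLeffler α) (Icc (-R) R) := by
    refine continuousOn_tsum (fun k => ((continuous_pow k).div_const _).continuousOn)
      (summable_mittagLeffler hα0 hα1 R) fun k z hz => ?_
    rw [norm_div, norm_pow, Real.norm_of_nonneg (hΓ k).le, Real.norm_eq_abs]
    gcongr
    exact abs_le.2 hz
  exact hcont.continuousAt
    (Icc_mem_nhds (by linarith [neg_abs_le z₀]) (by linarith [le_abs_self z₀]))

theorem continuous_mittagLeffler_comp_rpow {α : ℝ} (hα0 : 0 < α) (hα1 : α < 1) (ω : ℝ) :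
    Continuous fun u => mittagLeffler α (ω * u ^ α) :=
  (continuous_mittagLeffler hα0 hα1).comp
    (continuous_const.mul (Real.continuous_rpow_const hα0.le))

variable {a b : ℝ}

theorem intervalIntegral_integral_swap_triangle {Φ : ℝ → ℝ → ℝ} (hab : a ≤ b)
    (hΦ : ContinuousOn (uncurry Φ) (Icc a b ×ˢ Icc a b)) :
    ∫ t in a..b, ∫ s in a..t, Φ t s = ∫ s in a..b, ∫ t in s..b, Φ t s := by
  set F : ℝ → ℝ → ℝ := fun t s => if s ≤ t then Φ t s else 0
  have hF : Integrable (uncurry F)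
      ((volume.restrict (Ioc a b)).prod (volume.restrict (Ioc a b))) := by
    have hF_eq : uncurry F = {p : ℝ × ℝ | p.2 ≤ p.1}.indicator (uncurry Φ) := by
      ext ⟨t, s⟩; simp [F, indicator_apply]
    rw [hF_eq, Measure.prod_restrict]
    exact ((hΦ.integrableOn_compact (isCompact_Icc.prod isCompact_Icc)).mono_set
      (prod_mono Ioc_subset_Icc_self Ioc_subset_Icc_self)).indicator
      (measurableSet_le measurable_snd measurable_fst)
  have hleft :
      EqOn (fun t => ∫ s in a..t, Φ t s) (fun t => ∫ s in Ioc a b, F t s) (Ioc a b) := by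
    intro t ht
    dsimp only
    have hFt : (fun s => F t s) = (Iic t).indicator (Φ t) := by ext s; simp [F, indicator_apply]
    rw [hFt, setIntegral_indicator measurableSet_Iic, Ioc_inter_Iic, min_eq_right ht.2,
      integral_of_le ht.1.le]
  have hright :
      EqOn (fun s => ∫ t in s..b, Φ t s) (fun s => ∫ t in Ioc a b, F t s) (Ioc a b) := by
    intro s hs
    dsimp only
    have hFs : (fun t => F t s) = (Ici s).indicator (Φ · s) := by ext t; simp [F, indicator_apply]
    have hIcc : Ioc a b ∩ Ici s = Icc s b := by
      ext t
      simp only [mem_inter_iff, mem_Ioc, mem_Ici, mem_Icc]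
      exact ⟨fun h => ⟨h.2, h.1.2⟩, fun h => ⟨⟨hs.1.trans_le h.1, h.2⟩, h.1⟩⟩
    rw [hFs, setIntegral_indicator measurableSet_Ici, hIcc, integral_Icc_eq_integral_Ioc,
      integral_of_le hs.2]
  rw [integral_of_le hab, integral_of_le hab, setIntegral_congr_fun measurableSet_Ioc hleft,
    setIntegral_congr_fun measurableSet_Ioc hright]
  exact integral_integral_swap hF

theorem continuous_parametric_intervalIntegral_lower {F : ℝ → ℝ → ℝ}
    (hF : Continuous (uncurry F)) (b : ℝ) : Continuous fun x => ∫ s in x..b, F x s := by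
  have hsymm : (fun x => ∫ s in x..b, F x s) = fun x => -∫ s in b..x, F x s :=
    funext fun x => integral_symm _ _
  rw [hsymm]
  exact (continuous_parametric_intervalIntegral_of_continuous hF continuous_id).neg

section Kernel

variable {x : ℝ} {k g g' : ℝ → ℝ}

theorem integral_mul_comp_sub_eq_sub_integral_primitive (hk : Continuous k) (hxb : x ≤ b)
    (hg : ContinuousOn g (Icc x b)) (hg' : ∀ s ∈ Ioo x b, HasDerivAt g (g' s) s)
    (hg'c : Continuous g') :
    ∫ s in x..b, g s * k (s - x)
      = g b * (∫ u in 0..b - x, k u) - ∫ s in x..b, g' s * ∫ u in 0..s - x, k u := by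
  have hK : ∀ s, HasDerivAt (fun s => ∫ u in 0..s - x, k u) (k (s - x)) s := fun s =>
    (hk.integral_hasStrictDerivAt 0 (s - x)).hasDerivAt.comp_sub_const s x
  rw [integral_mul_deriv_eq_deriv_mul_of_hasDerivAt (by rwa [uIcc_of_le hxb]) (by fun_prop)
    (by rwa [min_eq_left hxb, max_eq_right hxb]) (fun s _ => hK s) (hg'c.intervalIntegrable _ _)
    ((hk.comp (continuous_sub_right x)).intervalIntegrable _ _), sub_self, integral_same,
    mul_zero, sub_zero]

theorem integral_mul_comp_sub_eqOn (hk : Continuous k) (hg : ContinuousOn g (Icc a b))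
    (hg' : ∀ s ∈ Ioo a b, HasDerivAt g (g' s) s) (hg'c : Continuous g') :
    EqOn (fun x => ∫ s in x..b, g s * k (s - x))
      (fun x => g b * (∫ u in 0..b - x, k u) - ∫ r in x..b, ∫ s in r..b, g' s * k (s - r))
      (Icc a b) := by
  intro x hx
  dsimp only
  rw [integral_mul_comp_sub_eq_sub_integral_primitive hk hx.2
      (hg.mono (Icc_subset_Icc_left hx.1)) (fun s hs => hg' s ⟨hx.1.trans_lt hs.1, hs.2⟩) hg'c,
    ← intervalIntegral_integral_swap_triangle hx.2 (Φ := fun s r => g' s * k (s - r))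
      (by fun_prop)]
  congr 2 with s
  rw [intervalIntegral.integral_const_mul, intervalIntegral.integral_comp_sub_left k s, sub_self]

theorem continuous_integral_mul_comp_sub (hk : Continuous k) (hg'c : Continuous g') (b : ℝ) :
    Continuous fun x => ∫ s in x..b, g' s * k (s - x) :=
  continuous_parametric_intervalIntegral_lower (by fun_prop) b

theorem continuousOn_integral_mul_comp_sub (hk : Continuous k) (hg : ContinuousOn g (Icc a b))
    (hg' : ∀ s ∈ Ioo a b, HasDerivAt g (g' s) s) (hg'c : Continuous g') :
    ContinuousOn (fun x => ∫ s in x..b, g s * k (s - x)) (Icc a b) := by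
  have hK := continuous_primitive (μ := volume) (fun _ _ => hk.intervalIntegrable _ _) 0
  have hV := continuous_parametric_intervalIntegral_lower
    (F := fun _ r => ∫ s in r..b, g' s * k (s - r))
    ((continuous_integral_mul_comp_sub hk hg'c b).comp continuous_snd) b
  exact ((continuous_const.mul (hK.comp (continuous_sub_left b))).sub hV).continuousOn.congr
    (integral_mul_comp_sub_eqOn hk hg hg' hg'c)

theorem hasDerivAt_integral_mul_comp_sub (hk : Continuous k) (hg : ContinuousOn g (Icc a b))
    (hg' : ∀ s ∈ Ioo a b, HasDerivAt g (g' s) s) (hg'c : Continuous g') {t : ℝ}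
    (ht : t ∈ Ioo a b) :
    HasDerivAt (fun x => ∫ s in x..b, g s * k (s - x))
      (-(g b * k (b - t)) + ∫ s in t..b, g' s * k (s - t)) t := by
  have hW := continuous_integral_mul_comp_sub hk hg'c b
  have hK : HasDerivAt (fun x => g b * ∫ u in 0..b - x, k u) (g b * -k (b - t)) t :=
    ((hk.integral_hasStrictDerivAt 0 (b - t)).hasDerivAt.comp_const_sub b t).const_mul _
  have hV : HasDerivAt (fun x => ∫ r in x..b, ∫ s in r..b, g' s * k (s - r))
      (-∫ s in t..b, g' s * k (s - t)) t :=
    integral_hasDerivAt_left (hW.intervalIntegrable _ _) (hW.stronglyMeasurableAtFilter _ _)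
      hW.continuousAt
  have hrepr := (integral_mul_comp_sub_eqOn hk hg hg' hg'c).eventuallyEq_of_mem
    (Icc_mem_nhds ht.1 ht.2)
  exact ((hK.sub hV).congr_of_eventuallyEq hrepr).congr_deriv (by ring)

end Kernel

theorem ContDiffOn.exists_continuous_hasDerivAt_Ioo {f : ℝ → ℝ} (hab : a < b)
    (hf : ContDiffOn ℝ 1 f (Icc a b)) :
    ∃ f' : ℝ → ℝ, Continuous f' ∧ ∀ x ∈ Ioo a b, HasDerivAt f (f' x) x := by
  refine ⟨IccExtend hab.le ((Icc a b).domRestrict (derivWithin f (Icc a b))),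
    (hf.continuousOn_derivWithin (uniqueDiffOn_Icc hab) le_rfl).domRestrict.Icc_extend',
    fun x hx => ?_⟩
  have hnhds : Icc a b ∈ nhds x := Icc_mem_nhds hx.1 hx.2
  rw [IccExtend_of_mem _ _ (Ioo_subset_Icc_self hx), domRestrict_apply,
    derivWithin_of_mem_nhds hnhds]
  exact ((hf.differentiableOn one_ne_zero x (Ioo_subset_Icc_self hx)).differentiableAt
    hnhds).hasDerivAt

theorem Eright_eq (α b : ℝ) (g : ℝ → ℝ) :
    Eright α b g
      = fun x => ∫ s in x..b, g s * mittagLeffler α (-(α / (1 - α)) * (s - x) ^ α) := by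
  funext x
  exact intervalIntegral.integral_congr fun s _ => mul_comm _ _

theorem ABRright_eq_neg_mul_deriv_Eright (B α b : ℝ) (g : ℝ → ℝ) (t : ℝ) :
    ABRright B α b g t = -(B / (1 - α)) * deriv (Eright α b g) t := by
  rw [ABRright, Eright_eq]

section ABC

variable {α : ℝ} {f f' g g' : ℝ → ℝ}

theorem continuousOn_Eright (hα0 : 0 < α) (hα1 : α < 1) (hg : ContinuousOn g (Icc a b))
    (hg' : ∀ s ∈ Ioo a b, HasDerivAt g (g' s) s) (hg'c : Continuous g') :
    ContinuousOn (Eright α b g) (Icc a b) := by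
  rw [Eright_eq]
  exact continuousOn_integral_mul_comp_sub (continuous_mittagLeffler_comp_rpow hα0 hα1 _) hg hg'
    hg'c

theorem hasDerivAt_Eright (hα0 : 0 < α) (hα1 : α < 1) (hg : ContinuousOn g (Icc a b))
    (hg' : ∀ s ∈ Ioo a b, HasDerivAt g (g' s) s) (hg'c : Continuous g') {t : ℝ}
    (ht : t ∈ Ioo a b) :
    HasDerivAt (Eright α b g) (-(g b * mittagLeffler α (-(α / (1 - α)) * (b - t) ^ α))
      + ∫ s in t..b, g' s * mittagLeffler α (-(α / (1 - α)) * (s - t) ^ α)) t := by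
  rw [Eright_eq]
  exact hasDerivAt_integral_mul_comp_sub (continuous_mittagLeffler_comp_rpow hα0 hα1 _) hg hg'
    hg'c ht

theorem integral_mul_ABCleft (B : ℝ) (hab : a ≤ b) (hα0 : 0 < α) (hα1 : α < 1)
    (hf : ∀ s ∈ Ioo a b, deriv f s = f' s) (hf'c : Continuous f')
    (hg : ContinuousOn g (Icc a b)) :
    ∫ t in a..b, g t * ABCleft B α a f t
      = B / (1 - α) * ∫ s in a..b, f' s * Eright α b g s := by
  set k := fun u => mittagLeffler α (-(α / (1 - α)) * u ^ α)
  have hk : Continuous k := continuous_mittagLeffler_comp_rpow hα0 hα1 _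
  calc ∫ t in a..b, g t * ABCleft B α a f t
      = B / (1 - α) * ∫ t in a..b, ∫ s in a..t, g t * (f' s * k (t - s)) := by
        rw [← intervalIntegral.integral_const_mul]
        refine intervalIntegral.integral_congr fun t ht => ?_
        rw [uIcc_of_le hab] at ht
        rw [ABCleft, integral_congr_Ioo_of_le ht.1 fun s hs => by
          rw [hf s ⟨hs.1, hs.2.trans_le ht.2⟩], mul_left_comm,
          ← intervalIntegral.integral_const_mul]
    _ = B / (1 - α) * ∫ s in a..b, ∫ t in s..b, g t * (f' s * k (t - s)) := by
        rw [intervalIntegral_integral_swap_triangle hab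
          ((hg.comp continuousOn_fst fun p hp => hp.1).mul (by fun_prop))]
    _ = B / (1 - α) * ∫ s in a..b, f' s * Eright α b g s := by
        congr 2 with s
        rw [Eright, ← intervalIntegral.integral_const_mul]
        congr 1 with t
        ring

theorem integral_mul_ABRright (B : ℝ) (hab : a ≤ b) (hα0 : 0 < α) (hα1 : α < 1)
    (hf : ContinuousOn f (Icc a b)) (hf' : ∀ s ∈ Ioo a b, HasDerivAt f (f' s) s)
    (hf'c : Continuous f') (hg : ContinuousOn g (Icc a b))
    (hg' : ∀ s ∈ Ioo a b, HasDerivAt g (g' s) s) (hg'c : Continuous g') :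
    ∫ t in a..b, f t * ABRright B α b g t = -(B / (1 - α)) *
      (f b * Eright α b g b - f a * Eright α b g a - ∫ t in a..b, f' t * Eright α b g t) := by
  set k := fun u => mittagLeffler α (-(α / (1 - α)) * u ^ α)
  have hk : Continuous k := continuous_mittagLeffler_comp_rpow hα0 hα1 _
  set E' := fun t => -(g b * k (b - t)) + ∫ s in t..b, g' s * k (s - t)
  have hE : ∀ t ∈ Ioo a b, HasDerivAt (Eright α b g) (E' t) t := fun t ht =>
    hasDerivAt_Eright hα0 hα1 hg hg' hg'c ht
  have hE'c : Continuous E' :=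
    (continuous_const.mul (hk.comp (continuous_sub_left b))).neg.add
      (continuous_integral_mul_comp_sub hk hg'c b)
  rw [← integral_mul_deriv_eq_deriv_mul_of_hasDerivAt (by rwa [uIcc_of_le hab])
    (by rw [uIcc_of_le hab]; exact continuousOn_Eright hα0 hα1 hg hg' hg'c)
    (by rwa [min_eq_left hab, max_eq_right hab]) (by rwa [min_eq_left hab, max_eq_right hab])
    (hf'c.intervalIntegrable a b) (hE'c.intervalIntegrable a b),
    ← intervalIntegral.integral_const_mul]
  refine integral_congr_Ioo_of_le hab fun t ht => ?_
  rw [ABRright_eq_neg_mul_deriv_Eright, (hE t ht).deriv]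
  ring

end ABC

theorem ABC_left_integration_by_parts_general (a b α B : ℝ) (hab : a ≤ b)
    (hα0 : 0 < α) (hα1 : α < 1) (f g : ℝ → ℝ)
    (hf : ContDiffOn ℝ 1 f (Set.Icc a b)) (hg : ContDiffOn ℝ 1 g (Set.Icc a b)) :
    (∫ t in a..b, g t * ABCleft B α a f t)
      = (∫ t in a..b, f t * ABRright B α b g t)
        + (B / (1 - α)) * (f b * Eright α b g b - f a * Eright α b g a) := by
  rcases hab.eq_or_lt with rfl | hlt
  · simp [Eright]
  obtain ⟨f', hf'c, hf'⟩ := hf.exists_continuous_hasDerivAt_Ioo hlt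
  obtain ⟨g', hg'c, hg'⟩ := hg.exists_continuous_hasDerivAt_Ioo hlt
  rw [integral_mul_ABCleft B hab hα0 hα1 (fun s hs => (hf' s hs).deriv) hf'c hg.continuousOn,
    integral_mul_ABRright B hab hα0 hα1 hf.continuousOn hf' hf'c hg.continuousOn hg' hg'c]
  ring

/-- Integration by parts for the left ABC fractional derivative. -/
theorem ABC_left_integration_by_parts (a b α B : ℝ) (hab : a ≤ b)
    (hα0 : 0 < α) (hα1 : α < 1) (hB : 0 < B) (f g : ℝ → ℝ)
    (hf : ContDiffOn ℝ 1 f (Set.Icc a b)) (hg : ContDiffOn ℝ 1 g (Set.Icc a b)) :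
    (∫ t in a..b, g t * ABCleft B α a f t)
      = (∫ t in a..b, f t * ABRright B α b g t)
        + (B / (1 - α)) * (f b * Eright α b g b - f a * Eright α b g a) :=
  ABC_left_integration_by_parts_general a b α B hab hα0 hα1 f g hf hg
end

section
/- (Discrete Fubini / integration by parts for discrete generalized fractional operators) Let a, b be integers with a < b, α ∈ (0,1/2), λ = -α/(1-α), and f, g : {a,...,b} → ℝ. Then Σ_{s=a+1}^{b-1} f(s) · (Σ_{τ=a+1}^{s} E_{\overline{α}}(λ, s-τ+1) g(τ)) = Σ_{s=a+1}^{b-1} g(s) · (Σ_{τ=s}^{b-1} E_{\overline{α}}(λ, τ-s+1) f(τ)). -/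
/-- Nabla discrete Mittag-Leffler function
`E_{\overline{α}}(λ, z) = Σ_{k=0}^∞ λ^k z^{\overline{kα}} / Γ(kα+1)`,
with the rising function `z^{\overline{β}} = Γ(z+β)/Γ(z)`. -/
noncomputable def dML (α lam z : ℝ) : ℝ :=
  ∑' k : ℕ, lam ^ k * (Real.Gamma (z + k * α) / Real.Gamma z) / Real.Gamma (k * α + 1)

/-! Only the lower-triangular shape of the kernel matters: exchanging the order of summation over
`{(s, τ) | m ≤ τ ≤ s ≤ n}` turns the left-hand side into the right-hand side, whatever the kernel. -/

theorem sum_mul_sum_Icc_lower_eq_sum_mul_sum_Icc_upper {R : Type*} [CommSemiring R]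
    (m n : ℤ) (K : ℤ → ℤ → R) (f g : ℤ → R) :
    ∑ s ∈ Finset.Icc m n, f s * ∑ τ ∈ Finset.Icc m s, K s τ * g τ
      = ∑ s ∈ Finset.Icc m n, g s * ∑ τ ∈ Finset.Icc s n, K τ s * f τ := by
  simp_rw [Finset.mul_sum]
  rw [Finset.sum_comm' (t' := Finset.Icc m n) (s' := fun τ => Finset.Icc τ n)]
  · refine Finset.sum_congr rfl fun _ _ => Finset.sum_congr rfl fun _ _ => ?_
    ring
  · intro s τ
    simp only [Finset.mem_Icc]
    omega

theorem discrete_generalized_parts_general (a b : ℤ) (α : ℝ)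
    (f g : ℤ → ℝ) :
    (∑ s ∈ Finset.Icc (a + 1) (b - 1), f s *
        ∑ τ ∈ Finset.Icc (a + 1) s, dML α (-(α / (1 - α))) ((s : ℝ) - (τ : ℝ) + 1) * g τ)
      = ∑ s ∈ Finset.Icc (a + 1) (b - 1), g s *
        ∑ τ ∈ Finset.Icc s (b - 1), dML α (-(α / (1 - α))) ((τ : ℝ) - (s : ℝ) + 1) * f τ :=
  sum_mul_sum_Icc_lower_eq_sum_mul_sum_Icc_upper (a + 1) (b - 1)
    (fun s τ => dML α (-(α / (1 - α))) ((s : ℝ) - (τ : ℝ) + 1)) f g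

/-- Discrete Fubini / summation by parts for the discrete generalized fractional
integral operators with discrete Mittag-Leffler kernel. -/
theorem discrete_generalized_parts (a b : ℤ) (hab : a < b) (α : ℝ)
    (hα0 : 0 < α) (hα2 : α < 1 / 2) (f g : ℤ → ℝ) :
    (∑ s ∈ Finset.Icc (a + 1) (b - 1), f s *
        ∑ τ ∈ Finset.Icc (a + 1) s, dML α (-(α / (1 - α))) ((s : ℝ) - (τ : ℝ) + 1) * g τ)
      = ∑ s ∈ Finset.Icc (a + 1) (b - 1), g s *
        ∑ τ ∈ Finset.Icc s (b - 1), dML α (-(α / (1 - α))) ((τ : ℝ) - (s : ℝ) + 1) * f τ :=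
  discrete_generalized_parts_general a b α f g
end

section
/- (Integration by parts for nabla discrete ABR fractional differences) Let a, b ∈ ℤ with b - a ≥ 2, α ∈ (0,1/2), B(α) > 0, and f, g : {a,...,b} → ℝ. Then Σ_{s=a+1}^{b-1} f(s) · ^{ABR}_a∇^α g(s) = Σ_{s=a+1}^{b-1} g(s) · ^{ABR}∇_b^α f(s). -/
/-- Left ABR nabla fractional difference
`^{ABR}_a∇^α g(t) = (B/(1-α)) ∇_t Σ_{s=a+1}^t g(s) E_{\overline{α}}(-α/(1-α), t-s+1)`. -/
noncomputable def ABRnablaLeft (B α : ℝ) (a : ℤ) (g : ℤ → ℝ) (t : ℤ) : ℝ :=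
  (B / (1 - α)) *
    ((fun τ : ℤ => ∑ s ∈ Finset.Icc (a + 1) τ,
        g s * dML α (-(α / (1 - α))) ((τ : ℝ) - (s : ℝ) + 1)) t
     - (fun τ : ℤ => ∑ s ∈ Finset.Icc (a + 1) τ,
        g s * dML α (-(α / (1 - α))) ((τ : ℝ) - (s : ℝ) + 1)) (t - 1))

/-- Right ABR nabla fractional difference
`^{ABR}∇_b^α f(t) = -(B/(1-α)) Δ_t Σ_{s=t}^{b-1} f(s) E_{\overline{α}}(-α/(1-α), s-t+1)`. -/
noncomputable def ABRnablaRight (B α : ℝ) (b : ℤ) (f : ℤ → ℝ) (t : ℤ) : ℝ :=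
  -(B / (1 - α)) *
    ((fun τ : ℤ => ∑ s ∈ Finset.Icc τ (b - 1),
        f s * dML α (-(α / (1 - α))) ((s : ℝ) - (τ : ℝ) + 1)) (t + 1)
     - (fun τ : ℤ => ∑ s ∈ Finset.Icc τ (b - 1),
        f s * dML α (-(α / (1 - α))) ((s : ℝ) - (τ : ℝ) + 1)) t)

open Finset

noncomputable def leftKernelSum (E : ℝ → ℝ) (a : ℤ) (g : ℤ → ℝ) (τ : ℤ) : ℝ :=
  ∑ s ∈ Icc (a + 1) τ, g s * E ((τ : ℝ) - (s : ℝ) + 1)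

noncomputable def rightKernelSum (E : ℝ → ℝ) (b : ℤ) (f : ℤ → ℝ) (τ : ℤ) : ℝ :=
  ∑ s ∈ Icc τ (b - 1), f s * E ((s : ℝ) - (τ : ℝ) + 1)

theorem sum_Icc_sum_Icc_sub_comm {M : Type*} [AddCommMonoid M] (a b d : ℤ) (hd : 0 ≤ d)
    (F : ℤ → ℤ → M) :
    ∑ t ∈ Icc a b, ∑ s ∈ Icc a (t - d), F t s = ∑ s ∈ Icc a b, ∑ t ∈ Icc (s + d) b, F t s :=
  sum_comm' fun t s => by simp only [mem_Icc]; omega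

theorem sum_mul_leftKernelSum_sub (E : ℝ → ℝ) (a b d : ℤ) (hd : 0 ≤ d) (f g : ℤ → ℝ) :
    ∑ t ∈ Icc (a + 1) (b - 1), f t * leftKernelSum E a g (t - d)
      = ∑ s ∈ Icc (a + 1) (b - 1), g s * rightKernelSum E b f (s + d) := by
  simp only [leftKernelSum, rightKernelSum, mul_sum]
  rw [sum_Icc_sum_Icc_sub_comm _ _ _ hd]
  refine sum_congr rfl fun s _ => sum_congr rfl fun t _ => ?_
  push_cast
  ring_nf

theorem sum_mul_leftKernelSum_nabla (E : ℝ → ℝ) (a b : ℤ) (f g : ℤ → ℝ) :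
    ∑ t ∈ Icc (a + 1) (b - 1), f t * (leftKernelSum E a g t - leftKernelSum E a g (t - 1))
      = ∑ s ∈ Icc (a + 1) (b - 1),
          g s * (rightKernelSum E b f s - rightKernelSum E b f (s + 1)) := by
  have same := sum_mul_leftKernelSum_sub E a b 0 le_rfl f g
  have shifted := sum_mul_leftKernelSum_sub E a b 1 zero_le_one f g
  simp only [sub_zero, add_zero] at same
  simp only [mul_sub, sum_sub_distrib, same, shifted]

theorem ABRnablaLeft_eq_sub (B α : ℝ) (a : ℤ) (g : ℤ → ℝ) (t : ℤ) :
    ABRnablaLeft B α a g t = B / (1 - α) * (leftKernelSum (dML α (-(α / (1 - α)))) a g t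
      - leftKernelSum (dML α (-(α / (1 - α)))) a g (t - 1)) :=
  rfl

theorem ABRnablaRight_eq_sub (B α : ℝ) (b : ℤ) (f : ℤ → ℝ) (t : ℤ) :
    ABRnablaRight B α b f t = -(B / (1 - α)) * (rightKernelSum (dML α (-(α / (1 - α)))) b f (t + 1)
      - rightKernelSum (dML α (-(α / (1 - α)))) b f t) :=
  rfl

theorem ABR_nabla_integration_by_parts_general (a b : ℤ) (α B : ℝ) (f g : ℤ → ℝ) :
    (∑ s ∈ Finset.Icc (a + 1) (b - 1), f s * ABRnablaLeft B α a g s)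
      = ∑ s ∈ Finset.Icc (a + 1) (b - 1), g s * ABRnablaRight B α b f s := by
  simp only [ABRnablaLeft_eq_sub, ABRnablaRight_eq_sub, neg_mul_comm, neg_sub,
    mul_left_comm _ (B / (1 - α)), ← mul_sum, sum_mul_leftKernelSum_nabla]

/-- Integration by parts for nabla discrete ABR fractional differences. -/
theorem ABR_nabla_integration_by_parts (a b : ℤ) (hab : 2 ≤ b - a) (α B : ℝ)
    (hα0 : 0 < α) (hα2 : α < 1 / 2) (hB : 0 < B) (f g : ℤ → ℝ) :
    (∑ s ∈ Finset.Icc (a + 1) (b - 1), f s * ABRnablaLeft B α a g s)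
      = ∑ s ∈ Finset.Icc (a + 1) (b - 1), g s * ABRnablaRight B α b f s :=
  ABR_nabla_integration_by_parts_general a b α B f g
end

section
/- (Integration by parts for nabla discrete ABR fractional sums) Let a, b ∈ ℤ with b - a ≥ 2, α ∈ (0,1/2), B(α) > 0, and f, g : {a,...,b} → ℝ. Then Σ_{s=a+1}^{b-1} g(s) · ^{AB}_a∇^{-α} f(s) = Σ_{s=a+1}^{b-1} f(s) · ^{AB}∇_b^{-α} g(s). -/
/-- Generalized rising function `z^{\overline{β}} = Γ(z+β)/Γ(z)`. -/
noncomputable def rise (z β : ℝ) : ℝ := Real.Gamma (z + β) / Real.Gamma z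

/-- Left AB fractional sum
`^{AB}_a∇^{-α} f(t) = ((1-α)/B) f(t) + (α/B)(1/Γ(α)) Σ_{s=a+1}^t (t-s+1)^{\overline{α-1}} f(s)`. -/
noncomputable def ABsumLeft (B α : ℝ) (a : ℤ) (f : ℤ → ℝ) (t : ℤ) : ℝ :=
  ((1 - α) / B) * f t + (α / B) * (1 / Real.Gamma α) *
    ∑ s ∈ Finset.Icc (a + 1) t, rise ((t : ℝ) - (s : ℝ) + 1) (α - 1) * f s

/-- Right AB fractional sum
`^{AB}∇_b^{-α} g(t) = ((1-α)/B) g(t) + (α/B)(1/Γ(α)) Σ_{s=t}^{b-1} (s-t+1)^{\overline{α-1}} g(s)`. -/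
noncomputable def ABsumRight (B α : ℝ) (b : ℤ) (g : ℤ → ℝ) (t : ℤ) : ℝ :=
  ((1 - α) / B) * g t + (α / B) * (1 / Real.Gamma α) *
    ∑ s ∈ Finset.Icc t (b - 1), rise ((s : ℝ) - (t : ℝ) + 1) (α - 1) * g s

theorem Finset.sum_mul_sum_Icc_le_comm {R : Type*} [CommSemiring R] (a b : ℤ) (K : ℤ → ℤ → R)
    (f g : ℤ → R) :
    ∑ t ∈ Finset.Icc a b, g t * ∑ s ∈ Finset.Icc a t, K t s * f s
      = ∑ t ∈ Finset.Icc a b, f t * ∑ s ∈ Finset.Icc t b, K s t * g s := by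
  simp only [Finset.mul_sum]
  rw [Finset.sum_comm' (t' := Finset.Icc a b) (s' := fun s => Finset.Icc s b)]
  · exact Finset.sum_congr rfl fun _ _ => Finset.sum_congr rfl fun _ _ => by ring
  · intro t s
    simp only [Finset.mem_Icc]
    omega

theorem AB_sum_integration_by_parts_general (a b : ℤ) (α B : ℝ) (f g : ℤ → ℝ) :
    (∑ s ∈ Finset.Icc (a + 1) (b - 1), g s * ABsumLeft B α a f s)
      = ∑ s ∈ Finset.Icc (a + 1) (b - 1), f s * ABsumRight B α b g s := by
  have h := Finset.sum_mul_sum_Icc_le_comm (a + 1) (b - 1)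
    (fun t s => rise ((t : ℝ) - (s : ℝ) + 1) (α - 1)) f g
  simp only [ABsumLeft, ABsumRight, mul_add, Finset.sum_add_distrib, mul_left_comm _ (α / B * _),
    ← Finset.mul_sum, h]
  congr 1
  exact Finset.sum_congr rfl fun _ _ => by ring

/-- Integration by parts for nabla discrete ABR fractional sums. -/
theorem AB_sum_integration_by_parts (a b : ℤ) (hab : 2 ≤ b - a) (α B : ℝ)
    (hα0 : 0 < α) (hα2 : α < 1 / 2) (hB : 0 < B) (f g : ℤ → ℝ) :
    (∑ s ∈ Finset.Icc (a + 1) (b - 1), g s * ABsumLeft B α a f s)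
      = ∑ s ∈ Finset.Icc (a + 1) (b - 1), f s * ABsumRight B α b g s :=
  AB_sum_integration_by_parts_general a b α B f g
end

section
/- (Integration by parts for left discrete ABC fractional differences) Let a, b ∈ ℤ with b - a ≥ 2, α ∈ (0,1/2), B(α) > 0, and f, g : {a,...,b} → ℝ. Then Σ_{s=a+1}^{b-1} f(s) · ^{ABC}_a∇^α g(s) = Σ_{s=a+1}^{b-1} g(s-1) · ^{ABR}∇_b^α f(s-1) + (B(α)/(1-α)) · [g(t) · E^1_{\overline{α,1},-α/(1-α),b^-} f(t)]_{t=a}^{t=b-1}. -/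
/-- Left ABC nabla fractional difference
`^{ABC}_a∇^α g(t) = (B/(1-α)) Σ_{s=a+1}^t (∇g)(s) E_{\overline{α}}(-α/(1-α), t-s+1)`. -/
noncomputable def ABCnablaLeft (B α : ℝ) (a : ℤ) (g : ℤ → ℝ) (t : ℤ) : ℝ :=
  (B / (1 - α)) * ∑ s ∈ Finset.Icc (a + 1) t,
    (g s - g (s - 1)) * dML α (-(α / (1 - α))) ((t : ℝ) - (s : ℝ) + 1)

/-- Right discrete generalized fractional operator
`E^1_{\overline{α,1},λ,b^-} f(t) = Σ_{s=t}^{b-1} E_{\overline{α}}(λ, s-t+1) f(s)`. -/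
noncomputable def ErightD (α : ℝ) (b : ℤ) (f : ℤ → ℝ) (t : ℤ) : ℝ :=
  ∑ s ∈ Finset.Icc t (b - 1), dML α (-(α / (1 - α))) ((s : ℝ) - (t : ℝ) + 1) * f s

/-!
Write `Φ := E^1_{b^-} f`. Exchanging the order of summation over the triangle
`a < r ≤ s < b` turns `∑ f(s) · ^{ABC}_a∇^α g(s)` into `(B/(1-α)) ∑ (∇g)(r) Φ(r)`, and
`^{ABR}∇_b^α f(t) = -(B/(1-α)) (ΔΦ)(t)`. The identity is then summation by parts.
-/

open Finset

lemma Finset.sum_Icc_sum_Icc_comm {α M : Type*} [Preorder α] [LocallyFiniteOrder α]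
    [AddCommMonoid M] (a b : α) (F : α → α → M) :
    ∑ s ∈ Icc a b, ∑ r ∈ Icc a s, F r s = ∑ r ∈ Icc a b, ∑ s ∈ Icc r b, F r s :=
  sum_comm' fun _ _ => by
    simp only [mem_Icc]
    exact ⟨fun ⟨⟨_, hsb⟩, har, hrs⟩ => ⟨⟨hrs, hsb⟩, har, hrs.trans hsb⟩,
      fun ⟨⟨hrs, hsb⟩, har, _⟩ => ⟨⟨har.trans hrs, hsb⟩, har, hrs⟩⟩

lemma Int.sum_Icc_sub_pred {M : Type*} [AddCommGroup M] (F : ℤ → M) {a n : ℤ} (h : a ≤ n) :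
    ∑ r ∈ Icc (a + 1) n, (F r - F (r - 1)) = F n - F a := by
  induction n, h using Int.leInduction with
  | base => simp
  | succ n hn ih =>
    rw [← insert_Icc_sub_one_right_eq_Icc (by omega), sum_insert (by simp),
      add_sub_cancel_right, ih, sub_add_sub_cancel]

lemma Int.sum_Icc_by_parts {R : Type*} [CommRing R] (g Φ : ℤ → R) {a n : ℤ} (h : a ≤ n) :
    ∑ r ∈ Icc (a + 1) n, (g r - g (r - 1)) * Φ r
      = g n * Φ n - g a * Φ a - ∑ r ∈ Icc (a + 1) n, g (r - 1) * (Φ r - Φ (r - 1)) := by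
  rw [← Int.sum_Icc_sub_pred (fun r => g r * Φ r) h, ← sum_sub_distrib]
  exact sum_congr rfl fun _ _ => by ring

lemma ABRnablaRight_eq (B α : ℝ) (b : ℤ) (f : ℤ → ℝ) (t : ℤ) :
    ABRnablaRight B α b f t = -(B / (1 - α)) * (ErightD α b f (t + 1) - ErightD α b f t) := by
  simp only [ABRnablaRight, ErightD, mul_comm (f _)]

lemma sum_mul_ABCnablaLeft (B α : ℝ) (a b : ℤ) (f g : ℤ → ℝ) :
    ∑ s ∈ Icc (a + 1) (b - 1), f s * ABCnablaLeft B α a g s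
      = B / (1 - α) * ∑ r ∈ Icc (a + 1) (b - 1), (g r - g (r - 1)) * ErightD α b f r := by
  simp only [ABCnablaLeft, ErightD, mul_sum]
  rw [← sum_Icc_sum_Icc_comm]
  exact sum_congr rfl fun _ _ => sum_congr rfl fun _ _ => by ring

theorem ABC_nabla_left_integration_by_parts_general (a b : ℤ) (hab : 2 ≤ b - a) (α B : ℝ)
    (f g : ℤ → ℝ) :
    (∑ s ∈ Finset.Icc (a + 1) (b - 1), f s * ABCnablaLeft B α a g s)
      = (∑ s ∈ Finset.Icc (a + 1) (b - 1), g (s - 1) * ABRnablaRight B α b f (s - 1))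
        + (B / (1 - α)) * (g (b - 1) * ErightD α b f (b - 1) - g a * ErightD α b f a) := by
  simp only [ABRnablaRight_eq, sub_add_cancel]
  rw [sum_mul_ABCnablaLeft, Int.sum_Icc_by_parts g (ErightD α b f) (by omega : a ≤ b - 1)]
  simp only [mul_left_comm (g _), ← mul_sum]
  ring

/-- Integration by parts for left discrete ABC fractional differences. -/
theorem ABC_nabla_left_integration_by_parts (a b : ℤ) (hab : 2 ≤ b - a) (α B : ℝ)
    (hα0 : 0 < α) (hα2 : α < 1 / 2) (hB : 0 < B) (f g : ℤ → ℝ) :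
    (∑ s ∈ Finset.Icc (a + 1) (b - 1), f s * ABCnablaLeft B α a g s)
      = (∑ s ∈ Finset.Icc (a + 1) (b - 1), g (s - 1) * ABRnablaRight B α b f (s - 1))
        + (B / (1 - α)) * (g (b - 1) * ErightD α b f (b - 1) - g a * ErightD α b f a) :=
  ABC_nabla_left_integration_by_parts_general a b hab α B f g
end

section
/- (Reality of eigenvalues for the ABR fractional Sturm–Liouville equation) Let 0 < α < 1, p, q, r : [a,b] → ℝ continuous with p > 0 and r > 0 on [a,b]. Suppose λ ∈ ℂ and x is a nontrivial (sufficiently regular) complex-valued solution of ^{ABR}_a D^α (p(t) · ^{ABR}D_b^α x(t)) + q(t)x(t) = λ r(t) x(t) on (a,b), where the integration by parts formula for ABR derivatives applies to x and its conjugate. Then λ is real. -/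
open intervalIntegral ComplexConjugate

/-- Left ABR fractional derivative (complex-valued functions, real ML kernel). -/
noncomputable def ABRleftC (B α a : ℝ) (f : ℝ → ℂ) (t : ℝ) : ℂ :=
  ((B / (1 - α) : ℝ) : ℂ) *
    deriv (fun x => ∫ s in a..x,
      ((mittagLeffler α (-(α / (1 - α)) * (x - s) ^ α) : ℝ) : ℂ) * f s) t

/-- Right ABR fractional derivative (complex-valued functions, real ML kernel). -/
noncomputable def ABRrightC (B α b : ℝ) (f : ℝ → ℂ) (t : ℝ) : ℂ :=
  -((B / (1 - α) : ℝ) : ℂ) *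
    deriv (fun x => ∫ s in x..b,
      ((mittagLeffler α (-(α / (1 - α)) * (s - x) ^ α) : ℝ) : ℂ) * f s) t

/-- The fractional Sturm–Liouville operator
`L₁ x(t) = ^{ABR}_a D^α (p(t) ^{ABR}D_b^α x(t)) + q(t) x(t)`. -/
noncomputable def SLopC (B α a b : ℝ) (p q : ℝ → ℝ) (x : ℝ → ℂ) (t : ℝ) : ℂ :=
  ABRleftC B α a (fun s => (p s : ℂ) * ABRrightC B α b x s) t + (q t : ℂ) * x t

/-- Reality of eigenvalues for the ABR fractional Sturm–Liouville equation
`^{ABR}_a D^α (p · ^{ABR}D_b^α x) + q x = λ r x` on `(a,b)`, for a nontrivial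
sufficiently regular solution `x` (the ABR integration by parts formula applies to
`x` and its conjugate: hypotheses `h1`, `h2`, `hcx`). -/
theorem SL_eigenvalues_real (a b α B : ℝ) (hab : a < b)
    (hα0 : 0 < α) (hα1 : α < 1) (hB : 0 < B)
    (p q r : ℝ → ℝ) (hp : ContinuousOn p (Set.Icc a b)) (hq : ContinuousOn q (Set.Icc a b))
    (hr : ContinuousOn r (Set.Icc a b))
    (hppos : ∀ t ∈ Set.Icc a b, 0 < p t) (hrpos : ∀ t ∈ Set.Icc a b, 0 < r t)
    (lam : ℂ) (x : ℝ → ℂ) (hxc : ContinuousOn x (Set.Icc a b))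
    (hxnt : ∃ t ∈ Set.Icc a b, x t ≠ 0)
    (heq : ∀ t ∈ Set.Ioo a b, SLopC B α a b p q x t = lam * (r t : ℂ) * x t)
    (hcx : ∀ t, conj (SLopC B α a b p q x t) = SLopC B α a b p q (fun s => conj (x s)) t)
    (h1 : (∫ t in a..b,
            x t * ABRleftC B α a (fun s => (p s : ℂ) * ABRrightC B α b (fun w => conj (x w)) s) t)
          = ∫ t in a..b,
            ((p t : ℂ) * ABRrightC B α b (fun w => conj (x w)) t) * ABRrightC B α b x t)
    (h2 : (∫ t in a..b,
            conj (x t) * ABRleftC B α a (fun s => (p s : ℂ) * ABRrightC B α b x s) t)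
          = ∫ t in a..b,
            ((p t : ℂ) * ABRrightC B α b x t) * ABRrightC B α b (fun w => conj (x w)) t) :
    lam.im = 0 := by
  -- Abbreviations for the "nice" representatives of the two integrands
  set F : ℝ → ℂ := fun t => conj (x t) * (lam * (r t : ℂ) * x t - (q t : ℂ) * x t) with hF
  set G : ℝ → ℂ := fun t => x t * (conj lam * (r t : ℂ) * conj (x t) - (q t : ℂ) * conj (x t))
    with hG
  have hb0 : ∀ᵐ t : ℝ, t ∈ ({b} : Set ℝ)ᶜ :=
    MeasureTheory.compl_mem_ae_iff.mpr (MeasureTheory.measure_singleton b)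
  have hIoo : ∀ᵐ t : ℝ, t ∈ Set.uIoc a b → t ∈ Set.Ioo a b := by
    filter_upwards [hb0] with t ht hmem
    rw [Set.uIoc_of_le hab.le] at hmem
    exact ⟨hmem.1, lt_of_le_of_ne hmem.2 ht⟩
  -- Left ABR term of x equals λ r x − q x on (a,b)
  have key1 : ∀ t ∈ Set.Ioo a b,
      ABRleftC B α a (fun s => (p s : ℂ) * ABRrightC B α b x s) t
        = lam * (r t : ℂ) * x t - (q t : ℂ) * x t := by
    intro t ht
    have := heq t ht
    rw [SLopC] at this
    linear_combination this
  have key2 : ∀ t ∈ Set.Ioo a b,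
      ABRleftC B α a (fun s => (p s : ℂ) * ABRrightC B α b (fun w => conj (x w)) s) t
        = conj lam * (r t : ℂ) * conj (x t) - (q t : ℂ) * conj (x t) := by
    intro t ht
    have h := (hcx t).symm
    rw [heq t ht] at h
    rw [SLopC] at h
    simp only [map_mul, Complex.conj_ofReal] at h
    linear_combination h
  -- Replace the ABR integrals by integrals of F and G
  have hFint : (∫ t in a..b, F t) = ∫ t in a..b,
      conj (x t) * ABRleftC B α a (fun s => (p s : ℂ) * ABRrightC B α b x s) t := by
    refine intervalIntegral.integral_congr_ae ?_
    filter_upwards [hIoo] with t ht hmem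
    rw [hF]; rw [key1 t (ht hmem)]
  have hGint : (∫ t in a..b, G t) = ∫ t in a..b,
      x t * ABRleftC B α a (fun s => (p s : ℂ) * ABRrightC B α b (fun w => conj (x w)) s) t := by
    refine intervalIntegral.integral_congr_ae ?_
    filter_upwards [hIoo] with t ht hmem
    rw [hG]; rw [key2 t (ht hmem)]
  -- The two right-hand sides of h1, h2 agree
  have hRHS : (∫ t in a..b, ((p t : ℂ) * ABRrightC B α b x t) * ABRrightC B α b (fun w => conj (x w)) t)
      = ∫ t in a..b, ((p t : ℂ) * ABRrightC B α b (fun w => conj (x w)) t) * ABRrightC B α b x t := by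
    refine intervalIntegral.integral_congr ?_
    intro t _; ring
  have hFG : (∫ t in a..b, F t) = ∫ t in a..b, G t := by
    rw [hFint, hGint, h1, h2, hRHS]
  -- Continuity of F and G on [a,b]
  have hxconj : ContinuousOn (fun t => conj (x t)) (Set.Icc a b) :=
    Complex.continuous_conj.comp_continuousOn hxc
  have hrC : ContinuousOn (fun t => ((r t : ℝ) : ℂ)) (Set.Icc a b) :=
    Complex.continuous_ofReal.comp_continuousOn hr
  have hqC : ContinuousOn (fun t => ((q t : ℝ) : ℂ)) (Set.Icc a b) :=
    Complex.continuous_ofReal.comp_continuousOn hq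
  have hFc : ContinuousOn F (Set.Icc a b) := by
    exact hxconj.mul (((continuousOn_const.mul hrC).mul hxc).sub (hqC.mul hxc))
  have hGc : ContinuousOn G (Set.Icc a b) := by
    exact hxc.mul (((continuousOn_const.mul hrC).mul hxconj).sub (hqC.mul hxconj))
  have hFi : IntervalIntegrable F MeasureTheory.volume a b :=
    hFc.intervalIntegrable_of_Icc hab.le
  have hGi : IntervalIntegrable G MeasureTheory.volume a b :=
    hGc.intervalIntegrable_of_Icc hab.le
  -- Subtract
  have hsub : (∫ t in a..b, (F t - G t)) = 0 := by
    rw [intervalIntegral.integral_sub hFi hGi, hFG, sub_self]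
  have hFGid : ∀ t, F t - G t
      = (lam - conj lam) * ((r t : ℂ) * (x t * conj (x t))) := by
    intro t; rw [hF, hG]; ring
  have hmain : (lam - conj lam) * (∫ t in a..b, (r t : ℂ) * (x t * conj (x t))) = 0 := by
    rw [← intervalIntegral.integral_const_mul, ← hsub]
    exact intervalIntegral.integral_congr fun t _ => (hFGid t).symm
  -- Identify the integral with a positive real number
  have hid : (∫ t in a..b, (r t : ℂ) * (x t * conj (x t)))
      = ((∫ t in a..b, r t * Complex.normSq (x t) : ℝ) : ℂ) := by
    rw [← intervalIntegral.integral_ofReal]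
    refine intervalIntegral.integral_congr fun t _ => ?_
    rw [Complex.mul_conj]
    push_cast
    ring
  have hpos : 0 < ∫ t in a..b, r t * Complex.normSq (x t) := by
    obtain ⟨t₀, ht₀, hx₀⟩ := hxnt
    refine intervalIntegral.integral_pos hab
      (hr.mul (Complex.continuous_normSq.comp_continuousOn hxc)) ?_ ⟨t₀, ht₀, ?_⟩
    · intro t ht
      exact mul_nonneg (hrpos t (Set.Ioc_subset_Icc_self ht)).le (Complex.normSq_nonneg _)
    · exact mul_pos (hrpos t₀ ht₀) (Complex.normSq_pos.mpr hx₀)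
  rw [hid] at hmain
  have hlam : lam - conj lam = 0 := by
    rcases mul_eq_zero.mp hmain with h | h
    · exact h
    · exact absurd (Complex.ofReal_eq_zero.mp h) hpos.ne'
  have : conj lam = lam := (sub_eq_zero.mp hlam).symm
  exact (Complex.conj_eq_iff_im.mp this)
end

section
/- (Self-adjointness of the discrete ABR fractional Sturm–Liouville operator) Let a, b ∈ ℤ with b - a ≥ 2, α ∈ (0,1/2), B(α) > 0, p, q : {a,...,b} → ℝ with p > 0, and define L₂x(t) = ^{ABR}_a∇^α (p(t) · ^{ABR}∇_b^α x(t)) + q(t)x(t) for t ∈ {a+1,...,b-1}. Then for all complex-valued functions u, v on {a,...,b}, Σ_{t=a+1}^{b-1} \overline{L₂u(t)} v(t) = Σ_{t=a+1}^{b-1} \overline{u(t)} L₂v(t). -/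
open ComplexConjugate

/-- Left ABR nabla fractional difference (complex-valued functions). -/
noncomputable def ABRnablaLeftC (B α : ℝ) (a : ℤ) (g : ℤ → ℂ) (t : ℤ) : ℂ :=
  ((B / (1 - α) : ℝ) : ℂ) *
    ((fun τ : ℤ => ∑ s ∈ Finset.Icc (a + 1) τ,
        g s * ((dML α (-(α / (1 - α))) ((τ : ℝ) - (s : ℝ) + 1) : ℝ) : ℂ)) t
     - (fun τ : ℤ => ∑ s ∈ Finset.Icc (a + 1) τ,
        g s * ((dML α (-(α / (1 - α))) ((τ : ℝ) - (s : ℝ) + 1) : ℝ) : ℂ)) (t - 1))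

/-- Right ABR nabla fractional difference (complex-valued functions). -/
noncomputable def ABRnablaRightC (B α : ℝ) (b : ℤ) (f : ℤ → ℂ) (t : ℤ) : ℂ :=
  -((B / (1 - α) : ℝ) : ℂ) *
    ((fun τ : ℤ => ∑ s ∈ Finset.Icc τ (b - 1),
        f s * ((dML α (-(α / (1 - α))) ((s : ℝ) - (τ : ℝ) + 1) : ℝ) : ℂ)) (t + 1)
     - (fun τ : ℤ => ∑ s ∈ Finset.Icc τ (b - 1),
        f s * ((dML α (-(α / (1 - α))) ((s : ℝ) - (τ : ℝ) + 1) : ℝ) : ℂ)) t)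

/-- The discrete fractional Sturm–Liouville operator
`L₂ x(t) = ^{ABR}_a∇^α (p(t) ^{ABR}∇_b^α x(t)) + q(t) x(t)`. -/
noncomputable def dSLopC (B α : ℝ) (a b : ℤ) (p q : ℤ → ℝ) (x : ℤ → ℂ) (t : ℤ) : ℂ :=
  ABRnablaLeftC B α a (fun s => (p s : ℂ) * ABRnablaRightC B α b x s) t + (q t : ℂ) * x t

open Finset

/-!
Both ABR differences are first differences of truncated convolutions with the same kernel, a
function of `|t - s|` only, so exchanging the order of the double sums moves the left difference
from one factor of `Σ f · ∇g` onto the other as the right difference. Applied to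
`p · ∇_b^α x` this makes `Σ_t f(t) L₂g(t)` symmetric in `f` and `g`; since the kernel, `p` and `q`
are real, `L₂` commutes with complex conjugation, which turns the symmetry into self-adjointness.
-/

section TruncatedConvolution

variable {R : Type*} [CommRing R]

noncomputable def leftConv (a : ℤ) (k g : ℤ → R) (t : ℤ) : R :=
  ∑ s ∈ Icc (a + 1) t, g s * k (t - s)

noncomputable def rightConv (b : ℤ) (k f : ℤ → R) (t : ℤ) : R :=
  ∑ s ∈ Icc t (b - 1), f s * k (s - t)

theorem sum_mul_leftConv_sub_eq (a b : ℤ) {n : ℤ} (hn : 0 ≤ n) (k f g : ℤ → R) :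
    ∑ t ∈ Icc (a + 1) (b - 1), f t * leftConv a k g (t - n)
      = ∑ t ∈ Icc (a + 1) (b - 1), g t * rightConv b k f (t + n) := by
  simp only [leftConv, rightConv, mul_sum]
  rw [sum_comm' (t' := Icc (a + 1) (b - 1)) (s' := fun s => Icc (s + n) (b - 1))
    (fun t s => by simp only [mem_Icc]; omega)]
  refine sum_congr rfl fun s _ => sum_congr rfl fun t _ => ?_
  rw [show t - n - s = t - (s + n) by ring]
  ring

end TruncatedConvolution

noncomputable def abrKernel (α : ℝ) (n : ℤ) : ℂ :=
  dML α (-(α / (1 - α))) (n + 1)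

theorem ABRnablaLeftC_eq (B α : ℝ) (a : ℤ) (g : ℤ → ℂ) (t : ℤ) :
    ABRnablaLeftC B α a g t = ((B / (1 - α) : ℝ) : ℂ) *
      (leftConv a (abrKernel α) g t - leftConv a (abrKernel α) g (t - 1)) := by
  simp [ABRnablaLeftC, leftConv, abrKernel]

theorem ABRnablaRightC_eq (B α : ℝ) (b : ℤ) (f : ℤ → ℂ) (t : ℤ) :
    ABRnablaRightC B α b f t = ((B / (1 - α) : ℝ) : ℂ) *
      (rightConv b (abrKernel α) f t - rightConv b (abrKernel α) f (t + 1)) := by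
  simp only [ABRnablaRightC, rightConv, abrKernel, Int.cast_add, Int.cast_sub, Int.cast_one]
  ring

theorem sum_mul_ABRnablaLeftC (B α : ℝ) (a b : ℤ) (f g : ℤ → ℂ) :
    ∑ t ∈ Icc (a + 1) (b - 1), f t * ABRnablaLeftC B α a g t
      = ∑ t ∈ Icc (a + 1) (b - 1), g t * ABRnablaRightC B α b f t := by
  have shift0 := sum_mul_leftConv_sub_eq a b le_rfl (abrKernel α) f g
  have shift1 := sum_mul_leftConv_sub_eq a b zero_le_one (abrKernel α) f g
  simp only [sub_zero, add_zero] at shift0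
  simp only [ABRnablaLeftC_eq, ABRnablaRightC_eq, mul_left_comm (f _), mul_left_comm (g _),
    ← mul_sum, mul_sub, sum_sub_distrib, shift0, shift1]

theorem conj_ABRnablaLeftC (B α : ℝ) (a : ℤ) (g : ℤ → ℂ) (t : ℤ) :
    conj (ABRnablaLeftC B α a g t) = ABRnablaLeftC B α a (fun s => conj (g s)) t := by
  simp [ABRnablaLeftC, map_sum]

theorem conj_ABRnablaRightC (B α : ℝ) (b : ℤ) (f : ℤ → ℂ) (t : ℤ) :
    conj (ABRnablaRightC B α b f t) = ABRnablaRightC B α b (fun s => conj (f s)) t := by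
  simp [ABRnablaRightC, map_sum]

theorem conj_dSLopC (B α : ℝ) (a b : ℤ) (p q : ℤ → ℝ) (x : ℤ → ℂ) (t : ℤ) :
    conj (dSLopC B α a b p q x t) = dSLopC B α a b p q (fun s => conj (x s)) t := by
  simp [dSLopC, conj_ABRnablaLeftC, conj_ABRnablaRightC]

theorem sum_mul_dSLopC_comm (B α : ℝ) (a b : ℤ) (p q : ℤ → ℝ) (f g : ℤ → ℂ) :
    ∑ t ∈ Icc (a + 1) (b - 1), f t * dSLopC B α a b p q g t
      = ∑ t ∈ Icc (a + 1) (b - 1), g t * dSLopC B α a b p q f t := by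
  simp only [dSLopC, mul_add, sum_add_distrib, sum_mul_ABRnablaLeftC]
  congr 1 <;> exact sum_congr rfl fun t _ => by ring

theorem dSLop_self_adjoint_general (a b : ℤ) (α B : ℝ) (p q : ℤ → ℝ) (u v : ℤ → ℂ) :
    (∑ t ∈ Finset.Icc (a + 1) (b - 1), conj (dSLopC B α a b p q u t) * v t)
      = ∑ t ∈ Finset.Icc (a + 1) (b - 1), conj (u t) * dSLopC B α a b p q v t := by
  simp only [conj_dSLopC, mul_comm _ (v _)]
  exact sum_mul_dSLopC_comm B α a b p q v (fun s => conj (u s))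

/-- Self-adjointness of the discrete ABR fractional Sturm–Liouville operator with
respect to `⟨u,v⟩ = Σ_{t=a+1}^{b-1} conj u(t) v(t)`. -/
theorem dSLop_self_adjoint (a b : ℤ) (hab : 2 ≤ b - a) (α B : ℝ)
    (hα0 : 0 < α) (hα2 : α < 1 / 2) (hB : 0 < B)
    (p q : ℤ → ℝ) (hppos : ∀ t, 0 < p t) (u v : ℤ → ℂ) :
    (∑ t ∈ Finset.Icc (a + 1) (b - 1), conj (dSLopC B α a b p q u t) * v t)
      = ∑ t ∈ Finset.Icc (a + 1) (b - 1), conj (u t) * dSLopC B α a b p q v t :=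
  dSLop_self_adjoint_general a b α B p q u v
end

section
/- (Reality of eigenvalues, discrete ABR Sturm–Liouville) Let a, b ∈ ℤ with b - a ≥ 2, α ∈ (0,1/2), p, q, r : {a,...,b} → ℝ with p > 0 and r > 0. If λ ∈ ℂ and x : {a,...,b} → ℂ is not identically zero on {a+1,...,b-1} and satisfies ^{ABR}_a∇^α (p(t) · ^{ABR}∇_b^α x(t)) + q(t)x(t) = λ r(t) x(t) for all t ∈ {a+1,...,b-1}, then λ ∈ ℝ. -/
open ComplexConjugate

/-! By summation by parts the Sturm–Liouville operator `L` is symmetric on `{a+1, …, b-1}`: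
`∑ conj (x t) * L x t = ∑ p |∇_b x|² + q |x|²` is real, while the eigenvalue equation makes it
`λ ∑ r |x|²` with `∑ r |x|² > 0`. -/

open Finset

section IntervalFilter

variable {α : Type*} [LinearOrder α] [LocallyFiniteOrder α] {a b c : α}

lemma Icc_filter_le_of_le_right (h : c ≤ b) : {x ∈ Icc a b | x ≤ c} = Icc a c := by
  grind

lemma Icc_filter_le_of_left_le (h : a ≤ c) : {x ∈ Icc a b | c ≤ x} = Icc c b := by
  grind

end IntervalFilter

/-- The matrix of the left ABR difference on `{a+1, …, b-1}`; the right one has its transpose. -/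
noncomputable def abrWeight (B α : ℝ) (t s : ℤ) : ℂ :=
  ((B / (1 - α) : ℝ) : ℂ) *
    ((if s ≤ t then (dML α (-(α / (1 - α))) ((t : ℝ) - s + 1) : ℂ) else 0)
      - if s < t then (dML α (-(α / (1 - α))) ((t : ℝ) - s) : ℂ) else 0)

lemma ABRnablaLeftC_eq_sum_abrWeight (B α : ℝ) {a b t : ℤ} (ht : t ≤ b - 1) (g : ℤ → ℂ) :
    ABRnablaLeftC B α a g t = ∑ s ∈ Icc (a + 1) (b - 1), abrWeight B α t s * g s := by
  rw [ABRnablaLeftC]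
  beta_reduce
  rw [← Icc_filter_le_of_le_right ht, ← Icc_filter_le_of_le_right (show t - 1 ≤ b - 1 by omega),
    sum_filter, sum_filter, ← sum_sub_distrib, mul_sum]
  refine sum_congr rfl fun s _ => ?_
  rw [abrWeight]
  split_ifs <;> first | omega | (push_cast; ring_nf)

lemma ABRnablaRightC_eq_sum_abrWeight (B α : ℝ) {a b t : ℤ} (ht : a + 1 ≤ t) (f : ℤ → ℂ) :
    ABRnablaRightC B α b f t = ∑ s ∈ Icc (a + 1) (b - 1), abrWeight B α s t * f s := by
  rw [ABRnablaRightC]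
  beta_reduce
  rw [← Icc_filter_le_of_left_le ht, ← Icc_filter_le_of_left_le (show a + 1 ≤ t + 1 by omega),
    sum_filter, sum_filter, ← sum_sub_distrib, mul_sum]
  refine sum_congr rfl fun s _ => ?_
  rw [abrWeight]
  split_ifs <;> first | omega | (push_cast; ring_nf)

lemma ABRnablaRightC_conj (B α : ℝ) (b : ℤ) (x : ℤ → ℂ) (t : ℤ) :
    ABRnablaRightC B α b (fun s => conj (x s)) t = conj (ABRnablaRightC B α b x t) := by
  simp only [ABRnablaRightC, map_mul, map_sub, map_sum, map_neg, Complex.conj_ofReal]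

theorem sum_conj_mul_dSLopC (B α : ℝ) (a b : ℤ) (p q : ℤ → ℝ) (x : ℤ → ℂ) :
    ∑ t ∈ Icc (a + 1) (b - 1), conj (x t) * dSLopC B α a b p q x t
      = ((∑ t ∈ Icc (a + 1) (b - 1),
          (p t * Complex.normSq (ABRnablaRightC B α b x t) + q t * Complex.normSq (x t)) : ℝ)
        : ℂ) := by
  simp only [dSLopC, mul_add]
  rw [sum_add_distrib, sum_mul_ABRnablaLeftC]
  push_cast
  rw [← sum_add_distrib]
  refine sum_congr rfl fun t _ => ?_
  rw [ABRnablaRightC_conj, ← Complex.mul_conj, ← Complex.mul_conj]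
  ring

theorem dSL_eigenvalues_real_general (a b : ℤ) (α B : ℝ)
    (p q r : ℤ → ℝ) (hrpos : ∀ t, 0 < r t)
    (lam : ℂ) (x : ℤ → ℂ)
    (hxnt : ∃ t ∈ Finset.Icc (a + 1) (b - 1), x t ≠ 0)
    (heq : ∀ t ∈ Finset.Icc (a + 1) (b - 1),
      dSLopC B α a b p q x t = lam * (r t : ℂ) * x t) :
    lam.im = 0 := by
  set R := ∑ t ∈ Icc (a + 1) (b - 1), r t * Complex.normSq (x t) with hRdef
  have hR : 0 < R := by
    obtain ⟨t₀, ht₀, hx₀⟩ := hxnt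
    exact sum_pos' (fun t _ => mul_nonneg (hrpos t).le (Complex.normSq_nonneg _))
      ⟨t₀, ht₀, mul_pos (hrpos t₀) (Complex.normSq_pos.2 hx₀)⟩
  have heig : ∑ t ∈ Icc (a + 1) (b - 1), conj (x t) * dSLopC B α a b p q x t = lam * R := by
    rw [sum_congr rfl fun t ht => by rw [heq t ht], hRdef]
    push_cast
    rw [mul_sum]
    refine sum_congr rfl fun t _ => ?_
    rw [← Complex.mul_conj]
    ring
  have him := congrArg Complex.im ((sum_conj_mul_dSLopC B α a b p q x).symm.trans heig)
  rw [Complex.ofReal_im, Complex.im_mul_ofReal] at him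
  exact (mul_eq_zero.1 him.symm).resolve_right hR.ne'

/-- Reality of eigenvalues for the discrete ABR fractional Sturm–Liouville equation. -/
theorem dSL_eigenvalues_real (a b : ℤ) (hab : 2 ≤ b - a) (α B : ℝ)
    (hα0 : 0 < α) (hα2 : α < 1 / 2) (hB : 0 < B)
    (p q r : ℤ → ℝ) (hppos : ∀ t, 0 < p t) (hrpos : ∀ t, 0 < r t)
    (lam : ℂ) (x : ℤ → ℂ)
    (hxnt : ∃ t ∈ Finset.Icc (a + 1) (b - 1), x t ≠ 0)
    (heq : ∀ t ∈ Finset.Icc (a + 1) (b - 1),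
      dSLopC B α a b p q x t = lam * (r t : ℂ) * x t) :
    lam.im = 0 :=
  dSL_eigenvalues_real_general a b α B p q r hrpos lam x hxnt heq
end
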